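/- Let d ≥ 2 and let K ⊂ ℝ^d be a convex body in standard position: w(K) = 1, K is spiky in direction −e_d, and K ∩ H_K(−e_d) = {0}; write T_K = T_K(0) for the tangent cone of K at 0 and H_t = {x : x_d = t}. Then, as t → 0 along positive values, the sets (1/t)·((T_K \ int K) ∩ H_t) converge in the Hausdorff distance to ∂T_K ∩ H_1, where ∂T_K denotes the boundary of T_K. -/

import Mathlib

open Set Metric Pointwise RealInnerProductSpace MeasureTheory

noncomputable section

/-- A plank in `ℝ^d`: the region between two parallel hyperplanes, of width `w`. -/
def IsPlank {d : ℕ} (P : Set (EuclideanSpace ℝ (Fin d))) (w : ℝ) : Prop :=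
  ∃ (u : EuclideanSpace ℝ (Fin d)) (a b : ℝ), ‖u‖ = 1 ∧ a ≤ b ∧ w = b - a ∧
    P = {x | a ≤ ⟪x, u⟫ ∧ ⟪x, u⟫ ≤ b}

/-- The support function of a set. -/
def suppFn {d : ℕ} (K : Set (EuclideanSpace ℝ (Fin d))) (u : EuclideanSpace ℝ (Fin d)) : ℝ :=
  sSup ((fun x => ⟪x, u⟫) '' K)

/-- The minimal width of a set: the minimum of `h_K(u) + h_K(-u)` over unit vectors `u`. -/
def minWidth {d : ℕ} (K : Set (EuclideanSpace ℝ (Fin d))) : ℝ :=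
  sInf {w | ∃ u : EuclideanSpace ℝ (Fin d), ‖u‖ = 1 ∧ w = suppFn K u + suppFn K (-u)}

/-- The supporting hyperplane of `K` with outer normal `u`. -/
def suppHyp {d : ℕ} (K : Set (EuclideanSpace ℝ (Fin d))) (u : EuclideanSpace ℝ (Fin d)) :
    Set (EuclideanSpace ℝ (Fin d)) :=
  {x | ⟪x, u⟫ = suppFn K u}

/-- The tangent cone of `K` at a point `x`:
`closure {x + α (y - x) : y ∈ K, α ≥ 0}`. -/
def tangentConeOf {d : ℕ} (K : Set (EuclideanSpace ℝ (Fin d))) (x : EuclideanSpace ℝ (Fin d)) :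
    Set (EuclideanSpace ℝ (Fin d)) :=
  closure {z | ∃ y ∈ K, ∃ α : ℝ, 0 ≤ α ∧ z = x + α • (y - x)}

/-- `K` is spiky in direction `u`: `K ∩ H_K(u)` is a single point `x` at which
`T_K(x) ∩ H_K(u) = {x}`. -/
def IsSpiky {d : ℕ} (K : Set (EuclideanSpace ℝ (Fin d))) (u : EuclideanSpace ℝ (Fin d)) : Prop :=
  ∃ x, K ∩ suppHyp K u = {x} ∧ tangentConeOf K x ∩ suppHyp K u = {x}

/-
The tangent cone `T_K` is the closure of the convex cone `ℝ_{>0} • K`; as it meets `{x_d = 0}` only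
at its apex, its slice at height `1` is compact. A point `x` of the slice in `int T_K` is interior
to the cone itself (a convex set with nonempty interior has the same interior as its closure), so
some positive multiple of `x` lies in `int K`, and then so do all smaller ones since `0 ∈ K`. By
compactness this holds uniformly on the part of the slice at distance `≥ ε` from `∂T_K`, so for
small `t` the set `(1/t) • ((T_K \ int K) ∩ H_t)`, which always contains `∂T_K ∩ H_1`, lies within
`ε` of it.
-/

section

variable {E : Type*} [NormedAddCommGroup E] [NormedSpace ℝ E]

open Filter Topology

theorem exists_pos_add_smul_mem_of_mem_nhds {s : Set E} {x : E} (hs : s ∈ nhds x) (v : E) :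
    ∃ t : ℝ, 0 < t ∧ x + t • v ∈ s :=
  ((Continuous.tendsto' (f := fun t : ℝ => x + t • v) (by fun_prop) 0 x (by simp)).eventually_mem
    hs).exists_gt

theorem Convex.smul_mem_interior_of_zero_mem {K : Set E} (hK : Convex ℝ K) (h0 : (0 : E) ∈ K)
    {y : E} (hy : y ∈ interior K) {t : ℝ} (ht : t ∈ Ioc 0 1) : t • y ∈ interior K := by
  simpa using hK.add_smul_sub_mem_interior h0 hy ht

theorem Convex.exists_pos_smul_mem_interior_of_mem_interior_hull {K : Set E}
    (hK : Convex ℝ K) {z : E} (hz : z ∈ interior K) {x : E}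
    (hx : x ∈ interior (ConvexCone.hull ℝ K : Set E)) : ∃ τ : ℝ, 0 < τ ∧ τ • x ∈ interior K := by
  obtain ⟨s, hs, hsC⟩ := exists_pos_add_smul_mem_of_mem_nhds (mem_interior_iff_mem_nhds.1 hx)
    (x - z)
  obtain ⟨r, hr, k, hk, hrk⟩ := (ConvexCone.mem_hull_of_convex hK).1 hsC
  -- `(1 + s) • x = r • k + s • z`, so a multiple of `x` is a convex combination of `k` and `z`
  refine ⟨(1 + s) / (r + s), by positivity, ?_⟩
  have hcomb : ((1 + s) / (r + s)) • x = (s / (r + s)) • z + (r / (r + s)) • k := by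
    have hrs : r + s ≠ 0 := by positivity
    linear_combination (norm := skip) (-1 / (r + s)) • (hrk : r • k = x + s • (x - z))
    match_scalars <;> field_simp <;> ring
  rw [hcomb]
  exact hK.combo_interior_closure_mem_interior hz (subset_closure hk) (by positivity)
    (by positivity) (by field_simp; ring)

theorem IsCompact.exists_pos_forall_smul_mem {U S : Set E} (hU : IsOpen U)
    (hstar : ∀ y ∈ U, ∀ t ∈ Ioc (0 : ℝ) 1, t • y ∈ U) (hS : IsCompact S)
    (hSU : ∀ x ∈ S, ∃ τ : ℝ, 0 < τ ∧ τ • x ∈ U) :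
    ∃ t₀ : ℝ, 0 < t₀ ∧ ∀ x ∈ S, ∀ t ∈ Ioc 0 t₀, t • x ∈ U := by
  have hdown : ∀ (y : E) (a b : ℝ), 0 < a → a ≤ b → b • y ∈ U → a • y ∈ U := by
    intro y a b ha hab hy
    have hb := ha.trans_le hab
    have := hstar _ hy (a / b) ⟨by positivity, div_le_one_of_le₀ hab hb.le⟩
    rwa [smul_smul, div_mul_cancel₀ _ hb.ne'] at this
  have hmono : Monotone fun n : ℕ => (fun x : E => ((n : ℝ) + 1)⁻¹ • x) ⁻¹' U :=
    fun m n hmn x hx => hdown x _ _ (by positivity) (by gcongr) hx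
  have hcover : S ⊆ ⋃ n : ℕ, (fun x : E => ((n : ℝ) + 1)⁻¹ • x) ⁻¹' U := by
    intro x hx
    obtain ⟨τ, hτ, hτx⟩ := hSU x hx
    obtain ⟨n, hn⟩ := exists_nat_one_div_lt hτ
    exact mem_iUnion.2 ⟨n, hdown x _ _ (by positivity) (by simpa using hn.le) hτx⟩
  obtain ⟨N, hN⟩ := hS.elim_directed_cover _
    (fun n => hU.preimage (continuous_const_smul _)) hcover hmono.directed_le
  refine ⟨((N : ℝ) + 1)⁻¹, by positivity, fun x hx t ht => ?_⟩
  exact hdown x t _ ht.1 ht.2 (hN hx)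

theorem ConvexCone.smul_mem_interior (C : ConvexCone ℝ E) {c : ℝ} (hc : 0 < c) {x : E}
    (hx : x ∈ interior (C : Set E)) : c • x ∈ interior (C : Set E) := by
  have hsub : c • (C : Set E) ⊆ C := by
    rintro _ ⟨y, hy, rfl⟩
    exact C.smul_mem hc hy
  exact interior_mono hsub ((interior_smul₀ hc.ne' (C : Set E)).symm ▸ smul_mem_smul_set hx)

theorem ConvexCone.closure_hull_subset_setOf_nonneg {K : Set E} (f : StrongDual ℝ E)
    (hf : ∀ x ∈ K, 0 ≤ f x) : closure (hull ℝ K : Set E) ⊆ {x | 0 ≤ f x} :=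
  closure_minimal (hull_min (C := (positive ℝ ℝ).comap (f : E →ₗ[ℝ] ℝ)) hf)
    (isClosed_le continuous_const f.continuous)

theorem ConvexCone.isCompact_inter_setOf_eq_one [ProperSpace E] (C : ConvexCone ℝ E)
    (hC : IsClosed (C : Set E)) (f : StrongDual ℝ E) (hpos : ∀ x ∈ C, x ≠ 0 → 0 < f x) :
    IsCompact ((C : Set E) ∩ {x | f x = 1}) := by
  have hsphere : IsCompact ((C : Set E) ∩ sphere 0 1) := (isCompact_sphere 0 1).inter_left hC
  -- the slice lies in the image of the compact set `C ∩ sphere 0 1` under `y ↦ (f y)⁻¹ • y`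
  refine (hsphere.image_of_continuousOn (f := fun y => (f y)⁻¹ • y) ?_).of_isClosed_subset
    (hC.inter (isClosed_eq f.continuous continuous_const)) ?_
  · refine ContinuousOn.smul (ContinuousOn.inv₀ f.continuous.continuousOn fun y hy => ?_)
      continuousOn_id
    refine (hpos y hy.1 ?_).ne'
    rintro rfl
    simpa using hy.2
  · rintro x ⟨hxC, hx1 : f x = 1⟩
    have hx0 : x ≠ 0 := by rintro rfl; simp at hx1
    refine ⟨‖x‖⁻¹ • x, ⟨C.smul_mem (by positivity) hxC, by simp [norm_smul, hx0]⟩, ?_⟩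
    simp [hx1, smul_smul, hx0]

theorem IsCompact.nonempty_frontier_inter_setOf_eq {T : Set E} (f : E →ₗ[ℝ] ℝ) {a : ℝ}
    (hS : IsCompact (T ∩ {x | f x = a})) (hne : (T ∩ {x | f x = a}).Nonempty) {u : E}
    (hu : f u = 0) (hu0 : u ≠ 0) : (frontier T ∩ {x | f x = a}).Nonempty := by
  obtain ⟨g, -, hgu⟩ := exists_dual_vector ℝ u (norm_ne_zero_iff.2 hu0)
  -- a point of the slice maximising `g` is not interior: moving along `u` increases `g`
  obtain ⟨x, hx, hmax⟩ := hS.exists_isMaxOn hne g.continuous.continuousOn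
  refine ⟨x, ⟨subset_closure hx.1, fun hint => ?_⟩, hx.2⟩
  obtain ⟨s, hs, hsT⟩ := exists_pos_add_smul_mem_of_mem_nhds (mem_interior_iff_mem_nhds.1 hint) u
  have hle := hmax ⟨hsT, by simpa [hu] using hx.2⟩
  have : 0 < s * ‖u‖ := mul_pos hs (norm_pos_iff.2 hu0)
  simp [hgu] at hle
  linarith

theorem ConvexCone.tendsto_hausdorffDist_inv_smul_slices (C : ConvexCone ℝ E)
    (hC : IsClosed (C : Set E)) {K : Set E} (hK : Convex ℝ K) (h0 : (0 : E) ∈ K)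
    (hKC : K ⊆ C) (f : E →ₗ[ℝ] ℝ) (hL : IsCompact ((C : Set E) ∩ {x | f x = 1}))
    (hB : (frontier (C : Set E) ∩ {x | f x = 1}).Nonempty)
    (hscale : ∀ x ∈ interior (C : Set E), ∃ τ : ℝ, 0 < τ ∧ τ • x ∈ interior K) :
    Tendsto (fun t : ℝ => hausdorffDist ((1 / t) • (((C : Set E) \ interior K) ∩ {x | f x = t}))
      (frontier (C : Set E) ∩ {x | f x = 1})) (𝓝[>] 0) (𝓝 0) := by
  set B := frontier (C : Set E) ∩ {x | f x = 1}
  rw [Metric.tendsto_nhds]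
  intro ε hε
  -- the part of the slice `ε / 2`-away from `B` is a compact subset of the interior of `C`
  set S := ((C : Set E) ∩ {x | f x = 1}) ∩ {x | ε / 2 ≤ infDist x B}
  have hSint : S ⊆ interior C := by
    rintro x ⟨hx, hxB⟩
    by_contra hint
    have hxB' : x ∈ B := ⟨⟨subset_closure hx.1, hint⟩, hx.2⟩
    linarith [show ε / 2 ≤ infDist x B from hxB, infDist_zero_of_mem hxB']
  have hS : IsCompact S := hL.inter_right (isClosed_le continuous_const (continuous_infDist_pt B))
  obtain ⟨t₀, ht₀, hshrink⟩ := hS.exists_pos_forall_smul_mem isOpen_interior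
    (fun y hy t ht => hK.smul_mem_interior_of_zero_mem h0 hy ht) (fun x hx => hscale x (hSint hx))
  filter_upwards [Ioc_mem_nhdsGT ht₀] with t ht
  have htC : ∀ a : E, t • a ∈ C ↔ a ∈ C := fun a =>
    ⟨fun h => by simpa [smul_smul, ht.1.ne'] using C.smul_mem (inv_pos.2 ht.1) h,
      C.smul_mem ht.1⟩
  have hmem : ∀ a : E, a ∈ (1 / t) • (((C : Set E) \ interior K) ∩ {x | f x = t}) ↔
      (a ∈ C ∧ f a = 1) ∧ t • a ∉ interior K := by
    intro a
    rw [mem_smul_set_iff_inv_smul_mem₀ (by simp [ht.1.ne']), one_div, inv_inv]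
    simp [htC, ht.1.ne', and_right_comm]
  rw [dist_zero_right, Real.norm_of_nonneg hausdorffDist_nonneg]
  refine (hausdorffDist_le_of_mem_dist (half_pos hε).le (fun a ha => ?_) (fun b hb => ?_)).trans_lt
    (half_lt_self hε)
  · obtain ⟨haL, hat⟩ := (hmem a).1 ha
    by_contra! hfar
    have hfar' : ε / 2 ≤ infDist a B :=
      le_of_not_gt fun h => by
        obtain ⟨b, hb, hab⟩ := (infDist_lt_iff hB).1 h
        exact (hfar b hb).not_ge hab.le
    exact hat (hshrink a ⟨haL, hfar'⟩ t ht)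
  · refine ⟨b, (hmem b).2 ⟨⟨hC.frontier_subset hb.1, hb.2⟩, fun htb => ?_⟩,
      by simpa using (half_pos hε).le⟩
    have := C.smul_mem_interior (inv_pos.2 ht.1) (interior_mono hKC htb)
    rw [smul_smul, inv_mul_cancel₀ ht.1.ne', one_smul] at this
    exact hb.1.2 this

theorem Convex.tendsto_hausdorffDist_inv_smul_slices_closure_hull [ProperSpace E] {K : Set E}
    (hK : Convex ℝ K) (h0 : (0 : E) ∈ K) (hint : (interior K).Nonempty) (f : StrongDual ℝ E)
    (hpos : ∀ x ∈ closure (ConvexCone.hull ℝ K : Set E), x ≠ 0 → 0 < f x) {u : E}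
    (hu : f u = 0) (hu0 : u ≠ 0) :
    Tendsto (fun t : ℝ => hausdorffDist
      ((1 / t) • ((closure (ConvexCone.hull ℝ K : Set E) \ interior K) ∩ {x | f x = t}))
      (frontier (closure (ConvexCone.hull ℝ K : Set E)) ∩ {x | f x = 1})) (𝓝[>] 0) (𝓝 0) := by
  set C := (ConvexCone.hull ℝ K).closure
  have hC : IsClosed (C : Set E) := isClosed_closure
  have hKC : K ⊆ C := ConvexCone.subset_hull.trans subset_closure
  obtain ⟨z, hz⟩ := hint
  have hL := C.isCompact_inter_setOf_eq_one hC f hpos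
  have hne : ((C : Set E) ∩ {x | f x = 1}).Nonempty := by
    -- `K` has a nonzero point, since it is a neighbourhood of `z`
    obtain ⟨s, hs, hzs⟩ := exists_pos_add_smul_mem_of_mem_nhds (mem_interior_iff_mem_nhds.1 hz) u
    obtain ⟨y, hyK, hy0⟩ : ∃ y ∈ K, y ≠ 0 := by
      by_cases hz0 : z = 0
      · exact ⟨_, hzs, by simp [hz0, hs.ne', hu0]⟩
      · exact ⟨z, interior_subset hz, hz0⟩
    have hfy := hpos y (hKC hyK) hy0
    exact ⟨(f y)⁻¹ • y, C.smul_mem (inv_pos.2 hfy) (hKC hyK), by simp [hfy.ne']⟩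
  have hscale : ∀ x ∈ interior (C : Set E), ∃ τ : ℝ, 0 < τ ∧ τ • x ∈ interior K := by
    intro x hx
    rw [ConvexCone.coe_closure, (ConvexCone.hull ℝ K).convex
      |>.interior_closure_eq_interior_of_nonempty_interior
        ⟨z, interior_mono ConvexCone.subset_hull hz⟩] at hx
    exact hK.exists_pos_smul_mem_interior_of_mem_interior_hull hz hx
  exact C.tendsto_hausdorffDist_inv_smul_slices hC hK h0 hKC (f : E →ₗ[ℝ] ℝ) hL
    (hL.nonempty_frontier_inter_setOf_eq (f : E →ₗ[ℝ] ℝ) hne hu hu0) hscale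

end

theorem tangentConeOf_zero_eq_closure_hull {d : ℕ} {K : Set (EuclideanSpace ℝ (Fin d))}
    (hK : Convex ℝ K) (h0 : (0 : EuclideanSpace ℝ (Fin d)) ∈ K) :
    tangentConeOf K 0 = closure (ConvexCone.hull ℝ K : Set (EuclideanSpace ℝ (Fin d))) := by
  refine congrArg closure (Set.ext fun z => ?_)
  simp only [mem_ofPred_eq, zero_add, sub_zero, SetLike.mem_coe,
    ConvexCone.mem_hull_of_convex hK, mem_smul_set]
  constructor
  · rintro ⟨y, hy, α, hα, rfl⟩
    rcases hα.eq_or_lt with rfl | hα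
    · exact ⟨1, one_pos, 0, h0, by simp⟩
    · exact ⟨α, hα, y, hy, rfl⟩
  · rintro ⟨r, hr, y, hy, rfl⟩
    exact ⟨y, hy, r, hr.le, rfl⟩

theorem inner_le_suppFn {d : ℕ} {K : Set (EuclideanSpace ℝ (Fin d))} (hK : IsCompact K)
    (u : EuclideanSpace ℝ (Fin d)) {x : EuclideanSpace ℝ (Fin d)} (hx : x ∈ K) :
    ⟪x, u⟫ ≤ suppFn K u :=
  le_csSup (hK.image (continuous_id.inner continuous_const)).bddAbove (mem_image_of_mem _ hx)

/-- Lemma 1: for a spiky convex body in standard position, the scaled slices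
`(1/t) • ((T_K \ int K) ∩ H_t)` converge in Hausdorff distance to `∂T_K ∩ H_1` as `t → 0⁺`. -/
theorem scaled_slices_tendsto_boundary (d : ℕ) (hd : 2 ≤ d)
    (K : Set (EuclideanSpace ℝ (Fin d)))
    (hKc : IsCompact K) (hKconv : Convex ℝ K) (hKint : (interior K).Nonempty)
    (hspiky : IsSpiky K (-(EuclideanSpace.single (⟨d - 1, by omega⟩ : Fin d) (1 : ℝ))))
    (hzero : K ∩ suppHyp K (-(EuclideanSpace.single (⟨d - 1, by omega⟩ : Fin d) (1 : ℝ))) = {0}) :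
    Filter.Tendsto
      (fun t : ℝ => Metric.hausdorffDist
        ((1 / t) • ((tangentConeOf K 0 \ interior K) ∩
          {x : EuclideanSpace ℝ (Fin d) | x ⟨d - 1, by omega⟩ = t}))
        (frontier (tangentConeOf K 0) ∩
          {x : EuclideanSpace ℝ (Fin d) | x ⟨d - 1, by omega⟩ = 1}))
      (nhdsWithin 0 (Set.Ioi 0)) (nhds 0) := by
  set i : Fin d := ⟨d - 1, by omega⟩
  set H := suppHyp K (-EuclideanSpace.single i 1)
  have hinner : ∀ x : EuclideanSpace ℝ (Fin d), ⟪x, -EuclideanSpace.single i 1⟫ = -x i := by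
    simp [EuclideanSpace.inner_single_right]
  have h0 : (0 : EuclideanSpace ℝ (Fin d)) ∈ K ∩ H := hzero ▸ rfl
  have hsupp : suppFn K (-EuclideanSpace.single i 1) = 0 := by simpa [hinner] using h0.2.symm
  have hH : H = {x | x i = 0} := by
    ext x
    simp [H, suppHyp, hinner, hsupp]
  have hT := tangentConeOf_zero_eq_closure_hull hKconv h0.1
  have hTH : tangentConeOf K 0 ∩ H = {0} := by
    obtain ⟨x, hxK, hxT⟩ := hspiky
    obtain rfl : x = 0 := (singleton_eq_singleton_iff.1 (hxK.symm.trans hzero))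
    exact hxT
  have hnonneg := ConvexCone.closure_hull_subset_setOf_nonneg (EuclideanSpace.proj i)
    fun x hx => by simpa [hinner, hsupp] using inner_le_suppFn hKc (-EuclideanSpace.single i 1) hx
  have hpos : ∀ x ∈ closure (ConvexCone.hull ℝ K : Set (EuclideanSpace ℝ (Fin d))), x ≠ 0 →
      0 < EuclideanSpace.proj i x := by
    intro x hx hx0
    refine (hnonneg hx).lt_of_ne fun hxi => hx0 ?_
    have : x ∈ tangentConeOf K 0 ∩ H := ⟨hT ▸ hx, hH ▸ hxi.symm⟩
    simpa [hTH] using this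
  set j : Fin d := ⟨0, by omega⟩
  have hji : j ≠ i := by simp [j, i, Fin.ext_iff]; omega
  rw [hT]
  exact hKconv.tendsto_hausdorffDist_inv_smul_slices_closure_hull h0.1 hKint
    (EuclideanSpace.proj i) hpos (u := EuclideanSpace.single j 1) (by simp [hji])
    (by simp)

end
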